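/- arXiv:2601.17051 — 3 statements merged into one kernel-verified Lean document; each statement's English description precedes it below -/
import Mathlib

section
/- Let V be a real vector space of dimension 2n with n ≥ 1, and let Ω be a nondegenerate alternating 2-form on V. Then the top-degree form Ω^n (the n-fold wedge power of Ω) is nonzero. -/
open scoped TensorProduct

/-- Wedge product of real-valued alternating forms (shuffle/determinant convention). -/
noncomputable def wedge {V : Type*} [AddCommGroup V] [Module ℝ V] {k l : ℕ}
    (α : V [⋀^Fin k]→ₗ[ℝ] ℝ) (β : V [⋀^Fin l]→ₗ[ℝ] ℝ) :
    V [⋀^Fin (k + l)]→ₗ[ℝ] ℝ :=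
  AlternatingMap.domDomCongr finSumFinEquiv
    ((TensorProduct.lid ℝ ℝ).toLinearMap.compAlternatingMap (α.domCoprod β))

/-- A linear functional regarded as an alternating `1`-form. -/
noncomputable def oneForm {V : Type*} [AddCommGroup V] [Module ℝ V]
    (α : V →ₗ[ℝ] ℝ) : V [⋀^Fin 1]→ₗ[ℝ] ℝ :=
  AlternatingMap.ofSubsingleton ℝ V ℝ 0 α

/-- Cast a `k`-form along an equality of degrees. -/
def castForm {V : Type*} [AddCommGroup V] [Module ℝ V] {k l : ℕ} (h : k = l)
    (θ : V [⋀^Fin k]→ₗ[ℝ] ℝ) : V [⋀^Fin l]→ₗ[ℝ] ℝ :=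
  AlternatingMap.domDomCongr (finCongr h) θ

/-- The `n`-th wedge power of an alternating `2`-form. -/
noncomputable def wpow {V : Type*} [AddCommGroup V] [Module ℝ V]
    (Ω : V [⋀^Fin 2]→ₗ[ℝ] ℝ) : (n : ℕ) → V [⋀^Fin (2 * n)]→ₗ[ℝ] ℝ
  | 0 => castForm (by omega) (AlternatingMap.constOfIsEmpty ℝ V (Fin 0) (1 : ℝ))
  | n + 1 => castForm (by omega) (wedge Ω (wpow Ω n))

/-!
Induction on `n` by symplectic reduction. Pick `X, Y` with `Ω(X, Y) = 1`; their `Ω`-orthogonal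
`W` has codimension at most two, and `Ω` stays nondegenerate on it because `V = span {X, Y} ⊕ W`.
Expanding `Ω ∧ β` over the pairs of arguments fed to `Ω` (the cosets of
`Perm (Fin 2) × Perm (Fin l)` in the shuffle sum), every term pairing `X` or `Y` with a vector
of `W` vanishes, which leaves `Ω^(n+1)(X, Y, w) = (n + 1) Ω(X, Y) Ω^n(w)` for `w` in `W`.
-/

open Equiv

lemma Matrix.removeNth_succ_vecCons {β : Type*} {n : ℕ} (i : Fin (n + 1)) (x : β)
    (p : Fin (n + 1) → β) : i.succ.removeNth (vecCons x p) = vecCons x (i.removeNth p) :=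
  Fin.cons_comp_succ_succAbove x p i

lemma Fin.sum_univ_succ_succ {M : Type*} [AddCommMonoid M] {n : ℕ} (f : Fin (n + 2) → M) :
    ∑ i, f i = f 0 + f 1 + ∑ i : Fin n, f i.succ.succ := by
  rw [Fin.sum_univ_succ, Fin.sum_univ_succ, ← add_assoc]
  simp only [Fin.succ_zero_eq_one]

lemma finrank_le_finrank_ker_prod_add_two {K V : Type*} [Field K] [AddCommGroup V] [Module K V]
    [FiniteDimensional K V] (f g : V →ₗ[K] K) :
    Module.finrank K V ≤ Module.finrank K (LinearMap.ker (f.prod g)) + 2 := by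
  have hrank := LinearMap.finrank_range_add_finrank_ker (f.prod g)
  have hrange := Submodule.finrank_le (LinearMap.range (f.prod g))
  rw [Module.finrank_prod, Module.finrank_self] at hrange
  omega

lemma mk_eq_mk_of_forall_inl {ι κ : Type*} [Finite ι] [Finite κ] {g h : Perm (ι ⊕ κ)}
    (H : ∀ x, ∃ y, h (.inl x) = g (.inl y)) :
    (Quotient.mk'' g : Perm.ModSumCongr ι κ) = Quotient.mk'' h := by
  apply Quotient.sound'
  rw [QuotientGroup.leftRel_apply]
  apply Perm.mem_sumCongrHom_range_of_perm_mapsTo_inl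
  rintro _ ⟨x, rfl⟩
  obtain ⟨y, hy⟩ := H x
  exact ⟨y, by simp [hy]⟩

section TwoForm
variable {V : Type*} [AddCommGroup V] [Module ℝ V] (Ω : V [⋀^Fin 2]→ₗ[ℝ] ℝ)

lemma twoForm_apply_self (X : V) : Ω ![X, X] = 0 :=
  Ω.map_eq_zero_of_eq ![X, X] (i := 0) (j := 1) rfl (by decide)

lemma twoForm_apply_swap (X Y : V) : Ω ![Y, X] = -Ω ![X, Y] := by
  rw [← Ω.map_swap ![X, Y] (i := 0) (j := 1) (by decide)]
  congr 1
  ext t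
  fin_cases t <;> rfl

lemma twoForm_compLinearMap_apply {W : Type*} [AddCommGroup W] [Module ℝ W] (f : W →ₗ[ℝ] V)
    (X Y : W) : Ω.compLinearMap f ![X, Y] = Ω ![f X, f Y] := by
  rw [AlternatingMap.compLinearMap_apply]
  congr 1
  ext t
  fin_cases t <;> rfl

end TwoForm

section PairPerm
variable {l : ℕ}

def finTwoSumEquiv (l : ℕ) : Fin 2 ⊕ Fin l ≃ Fin (l + 2) :=
  finSumFinEquiv.trans (finCongr (Nat.add_comm 2 l))

@[simp] lemma finTwoSumEquiv_inl_zero : finTwoSumEquiv l (.inl 0) = 0 := rfl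

@[simp] lemma finTwoSumEquiv_inl_one : finTwoSumEquiv l (.inl 1) = 1 := by
  ext; simp [finTwoSumEquiv]

@[simp] lemma finTwoSumEquiv_inr (k : Fin l) : finTwoSumEquiv l (.inr k) = k.succ.succ := by
  ext; simp [finTwoSumEquiv]

def pairPerm (i : Fin (l + 2)) (j : Fin (l + 1)) : Perm (Fin (l + 2)) :=
  i.cycleRange.symm * Perm.decomposeFin.symm (0, j.cycleRange.symm)

@[simp] lemma pairPerm_zero (i : Fin (l + 2)) (j : Fin (l + 1)) : pairPerm i j 0 = i := by
  simp [pairPerm]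

@[simp] lemma pairPerm_one (i : Fin (l + 2)) (j : Fin (l + 1)) :
    pairPerm i j 1 = i.succAbove j := by
  simp [pairPerm]

@[simp] lemma pairPerm_succ_succ (i : Fin (l + 2)) (j : Fin (l + 1)) (k : Fin l) :
    pairPerm i j k.succ.succ = i.succAbove (j.succAbove k) := by
  simp [pairPerm, Perm.mul_apply]

lemma sign_pairPerm (i : Fin (l + 2)) (j : Fin (l + 1)) :
    Perm.sign (pairPerm i j) = (-1) ^ ((i : ℕ) + j) := by
  simp [pairPerm, Fin.sign_cycleRange, pow_add]

def pairSumPerm (i : Fin (l + 2)) (j : Fin (l + 1)) : Perm (Fin 2 ⊕ Fin l) :=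
  (finTwoSumEquiv l).symm.permCongr (pairPerm i j)

lemma finTwoSumEquiv_pairSumPerm (i : Fin (l + 2)) (j : Fin (l + 1)) (s : Fin 2 ⊕ Fin l) :
    finTwoSumEquiv l (pairSumPerm i j s) = pairPerm i j (finTwoSumEquiv l s) := by
  simp [pairSumPerm, Equiv.permCongr_apply]

end PairPerm

section ModSumCongr
variable {l : ℕ}

lemma sign_pairSumPerm (i : Fin (l + 2)) (j : Fin (l + 1)) :
    Perm.sign (pairSumPerm i j) = (-1) ^ ((i : ℕ) + j) := by
  rw [pairSumPerm, Perm.sign_permCongr, sign_pairPerm]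

lemma eq_of_mk_pairSumPerm_eq {i i' : Fin (l + 2)} {j j' : Fin (l + 1)}
    (hij : i < i.succAbove j) (hij' : i' < i'.succAbove j')
    (h : (Quotient.mk'' (pairSumPerm i j) : Perm.ModSumCongr (Fin 2) (Fin l)) =
      Quotient.mk'' (pairSumPerm i' j')) : i = i' ∧ j = j' := by
  rw [Quotient.eq'', QuotientGroup.leftRel_apply] at h
  obtain ⟨⟨sl, sr⟩, hs⟩ := h
  have key : ∀ x, pairPerm i' j' (finTwoSumEquiv l (.inl x)) =
      pairPerm i j (finTwoSumEquiv l (.inl (sl x))) := fun x => by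
    rw [← finTwoSumEquiv_pairSumPerm, ← finTwoSumEquiv_pairSumPerm,
      ← eq_inv_mul_iff_mul_eq.mp hs]
    simp
  have k0 := key 0
  have k1 := key 1
  have hsl : ∀ a b : Fin 2, a ≠ b → (a = 0 ∧ b = 1) ∨ (a = 1 ∧ b = 0) := by decide
  rcases hsl (sl 0) (sl 1) (sl.injective.ne (by decide)) with ⟨h0, h1⟩ | ⟨h0, h1⟩
  · simp only [h0, h1, finTwoSumEquiv_inl_zero, finTwoSumEquiv_inl_one, pairPerm_zero,
      pairPerm_one] at k0 k1
    subst k0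
    exact ⟨rfl, (Fin.succAbove_right_injective k1).symm⟩
  · simp only [h0, h1, finTwoSumEquiv_inl_zero, finTwoSumEquiv_inl_one, pairPerm_zero,
      pairPerm_one] at k0 k1
    rw [k1] at hij'
    rw [← k0] at hij
    exact absurd (hij.trans hij') (lt_irrefl i)

lemma exists_mk_pairSumPerm_eq (g : Perm (Fin 2 ⊕ Fin l)) :
    ∃ p : Fin (l + 2) × Fin (l + 1), p.1 < p.1.succAbove p.2 ∧
      (Quotient.mk'' (pairSumPerm p.1 p.2) : Perm.ModSumCongr (Fin 2) (Fin l)) =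
        Quotient.mk'' g := by
  have hval : ∀ i j t s, g (.inl t) = pairSumPerm i j (.inl s) ↔
      finTwoSumEquiv l (g (.inl t)) = pairPerm i j (finTwoSumEquiv l (.inl s)) :=
    fun i j t s => by rw [← finTwoSumEquiv_pairSumPerm, Equiv.apply_eq_iff_eq]
  have hne : finTwoSumEquiv l (g (.inl 0)) ≠ finTwoSumEquiv l (g (.inl 1)) := by simp
  rcases hne.lt_or_gt with hlt | hgt
  · obtain ⟨j, hj⟩ := Fin.exists_succAbove_eq hne.symm
    refine ⟨(finTwoSumEquiv l (g (.inl 0)), j), hj ▸ hlt, mk_eq_mk_of_forall_inl ?_⟩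
    simp only [Fin.forall_fin_two, hval]
    exact ⟨⟨0, by simp⟩, ⟨1, by simp [hj]⟩⟩
  · obtain ⟨j, hj⟩ := Fin.exists_succAbove_eq hne
    refine ⟨(finTwoSumEquiv l (g (.inl 1)), j), hj ▸ hgt, mk_eq_mk_of_forall_inl ?_⟩
    simp only [Fin.forall_fin_two, hval]
    exact ⟨⟨1, by simp [hj]⟩, ⟨0, by simp⟩⟩

end ModSumCongr

section WedgeTwoForm
variable {V : Type*} [AddCommGroup V] [Module ℝ V] {l : ℕ}

def wedgeTerm (α : V [⋀^Fin 2]→ₗ[ℝ] ℝ) (β : V [⋀^Fin l]→ₗ[ℝ] ℝ) (v : Fin (l + 2) → V)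
    (i : Fin (l + 2)) (j : Fin (l + 1)) : ℝ :=
  if i < i.succAbove j then
    (-1) ^ ((i : ℕ) + j) * (α ![v i, v (i.succAbove j)] * β (j.removeNth (i.removeNth v)))
  else 0

lemma summand_pairSumPerm (α : V [⋀^Fin 2]→ₗ[ℝ] ℝ) (β : V [⋀^Fin l]→ₗ[ℝ] ℝ)
    (i : Fin (l + 2)) (j : Fin (l + 1)) (v : Fin (l + 2) → V) :
    AlternatingMap.domCoprod.summand α β (Quotient.mk'' (pairSumPerm i j))
        (v ∘ finTwoSumEquiv l) =
      (-1 : ℤˣ) ^ ((i : ℕ) + j) •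
        (α ![v i, v (i.succAbove j)] ⊗ₜ β (j.removeNth (i.removeNth v))) := by
  have hinl : (fun t => (v ∘ finTwoSumEquiv l) (pairSumPerm i j (.inl t))) =
      ![v i, v (i.succAbove j)] := by
    funext t
    fin_cases t <;> simp [finTwoSumEquiv_pairSumPerm]
  have hinr : (fun k => (v ∘ finTwoSumEquiv l) (pairSumPerm i j (.inr k))) =
      j.removeNth (i.removeNth v) := by
    funext k
    simp [finTwoSumEquiv_pairSumPerm, Fin.removeNth_apply]
  rw [AlternatingMap.domCoprod.summand_mk'', smul_apply, MultilinearMap.domDomCongr_apply,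
    MultilinearMap.domCoprod_apply, sign_pairSumPerm]
  simp only [AlternatingMap.coe_multilinearMap]
  rw [hinl, hinr]

theorem castForm_wedge_apply (α : V [⋀^Fin 2]→ₗ[ℝ] ℝ) (β : V [⋀^Fin l]→ₗ[ℝ] ℝ)
    (v : Fin (l + 2) → V) :
    castForm (Nat.add_comm 2 l) (wedge α β) v = ∑ i, ∑ j, wedgeTerm α β v i j := by
  simp only [wedgeTerm]
  rw [← Fintype.sum_prod_type', ← Finset.sum_filter, castForm, wedge,
    AlternatingMap.domDomCongr_apply, AlternatingMap.domDomCongr_apply,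
    LinearMap.compAlternatingMap_apply, AlternatingMap.domCoprod_apply, sum_apply, map_sum]
  symm
  refine Finset.sum_bij (fun p _ => Quotient.mk'' (pairSumPerm p.1 p.2))
    (fun _ _ => Finset.mem_univ _) ?_ ?_ ?_
  · intro p hp q hq h
    exact Prod.ext_iff.mpr (eq_of_mk_pairSumPerm_eq (Finset.mem_filter.mp hp).2
      (Finset.mem_filter.mp hq).2 h)
  · intro σ _
    induction σ using Quotient.inductionOn' with | h σ => ?_
    obtain ⟨p, hp, h⟩ := exists_mk_pairSumPerm_eq σ
    exact ⟨p, by simpa using hp, h⟩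
  · rintro ⟨i, j⟩ -
    have hv : (v ∘ finCongr (Nat.add_comm 2 l)) ∘ finSumFinEquiv = v ∘ finTwoSumEquiv l := rfl
    rw [hv, summand_pairSumPerm, Units.smul_def, map_zsmul]
    simp only [LinearEquiv.coe_coe, TensorProduct.lid_tmul, smul_eq_mul, zsmul_eq_mul]
    push_cast
    ring

lemma sum_wedgeTerm_cons_cons {n : ℕ} (α : V [⋀^Fin 2]→ₗ[ℝ] ℝ)
    (β : V [⋀^Fin (n + 2)]→ₗ[ℝ] ℝ) {X Y : V} {w : Fin (n + 2) → V}
    (hX : ∀ k, α ![X, w k] = 0) (hY : ∀ k, α ![Y, w k] = 0) :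
    ∑ i, ∑ j, wedgeTerm α β (Matrix.vecCons X (Matrix.vecCons Y w)) i j =
      α ![X, Y] * β w + ∑ i, ∑ j, wedgeTerm α ((β.curryLeft X).curryLeft Y) w i j := by
  set u : Fin (n + 4) → V := Matrix.vecCons X (Matrix.vecCons Y w)
  have h00 : wedgeTerm α β u 0 0 = α ![X, Y] * β w := by
    simp [wedgeTerm, u]
  have h0 : ∀ j : Fin (n + 2), wedgeTerm α β u 0 j.succ = 0 := fun j => by
    simp [wedgeTerm, u, hX]
  have h10 : wedgeTerm α β u 1 0 = 0 := by
    simp [wedgeTerm]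
  have h1 : ∀ j : Fin (n + 2), wedgeTerm α β u 1 j.succ = 0 := fun j => by
    simp [wedgeTerm, u, hY]
  have hss : ∀ i, ∑ j, wedgeTerm α β u i.succ.succ j =
      ∑ j, wedgeTerm α ((β.curryLeft X).curryLeft Y) w i j := fun i => by
    rw [Fin.sum_univ_succ_succ]
    simp [wedgeTerm, u, Matrix.removeNth_succ_vecCons, pow_add]
  rw [Fin.sum_univ_succ_succ, Fin.sum_univ_succ (fun j => wedgeTerm α β u 0 j),
    Fin.sum_univ_succ (fun j => wedgeTerm α β u 1 j)]
  simp [h00, h0, h10, h1, hss]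

end WedgeTwoForm

section WedgePower
variable {V : Type*} [AddCommGroup V] [Module ℝ V] (Ω : V [⋀^Fin 2]→ₗ[ℝ] ℝ)

lemma wpow_zero_apply (u : Fin (2 * 0) → V) : wpow Ω 0 u = 1 := by
  simp [wpow, castForm]

lemma wpow_succ_apply (m : ℕ) (u : Fin (2 * m + 2) → V) :
    wpow Ω (m + 1) u = ∑ i, ∑ j, wedgeTerm Ω (wpow Ω m) u i j :=
  castForm_wedge_apply Ω (wpow Ω m) u

lemma wpow_succ_cons_cons {m : ℕ} {X Y : V} {w : Fin (2 * m) → V}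
    (hX : ∀ k, Ω ![X, w k] = 0) (hY : ∀ k, Ω ![Y, w k] = 0) :
    wpow Ω (m + 1) (Matrix.vecCons X (Matrix.vecCons Y w)) =
      (m + 1) * (Ω ![X, Y] * wpow Ω m w) := by
  induction m with
  | zero =>
    rw [wpow_succ_apply Ω 0]
    simp [wedgeTerm, Fin.sum_univ_two]
  | succ m ih =>
    -- the arities `2 * (m + 1)` and `2 * m + 2` agree only up to unfolding `*`, hence `erw`
    have hcurry : ∀ i j, wedgeTerm Ω (((wpow Ω (m + 1)).curryLeft X).curryLeft Y) w i j =
        (m + 1) * Ω ![X, Y] * wedgeTerm Ω (wpow Ω m) w i j := fun i j => by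
      simp only [wedgeTerm, AlternatingMap.curryLeft_apply_apply]
      split_ifs
      · erw [ih (w := j.removeNth (i.removeNth w)) (fun k => hX _) (fun k => hY _)]
        ring
      · ring
    rw [wpow_succ_apply]
    erw [sum_wedgeTerm_cons_cons (n := 2 * m) Ω _ hX hY, wpow_succ_apply Ω m w]
    simp only [hcurry, ← Finset.mul_sum]
    push_cast
    ring

lemma wpow_compLinearMap {W : Type*} [AddCommGroup W] [Module ℝ W] (f : W →ₗ[ℝ] V) (m : ℕ) :
    wpow (Ω.compLinearMap f) m = (wpow Ω m).compLinearMap f := by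
  induction m with
  | zero => ext u; simp only [AlternatingMap.compLinearMap_apply, wpow_zero_apply]
  | succ m ih =>
    ext u
    rw [AlternatingMap.compLinearMap_apply, wpow_succ_apply, wpow_succ_apply]
    simp only [wedgeTerm, ih, twoForm_compLinearMap_apply]
    rfl

end WedgePower

section Nondegenerate
variable {V : Type*} [AddCommGroup V] [Module ℝ V] (Ω : V [⋀^Fin 2]→ₗ[ℝ] ℝ)

def IsNondegenerateTwoForm : Prop := ∀ X : V, X ≠ 0 → ∃ Y, Ω ![X, Y] ≠ 0

def twoFormContract (X : V) : V →ₗ[ℝ] ℝ where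
  toFun Y := Ω ![X, Y]
  map_add' Y Y' := (Ω.curryLeft X).map_vecCons_add _ Y Y'
  map_smul' c Y := (Ω.curryLeft X).map_vecCons_smul _ c Y

@[simp] lemma twoFormContract_apply (X Y : V) : twoFormContract Ω X Y = Ω ![X, Y] := rfl

def pairOrthogonal (X Y : V) : Submodule ℝ V :=
  LinearMap.ker ((twoFormContract Ω X).prod (twoFormContract Ω Y))

lemma mem_pairOrthogonal {X Y Z : V} :
    Z ∈ pairOrthogonal Ω X Y ↔ Ω ![X, Z] = 0 ∧ Ω ![Y, Z] = 0 := by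
  simp [pairOrthogonal]

lemma finrank_le_finrank_pairOrthogonal_add_two [FiniteDimensional ℝ V] (X Y : V) :
    Module.finrank ℝ V ≤ Module.finrank ℝ (pairOrthogonal Ω X Y) + 2 :=
  finrank_le_finrank_ker_prod_add_two _ _

variable {Ω} in
lemma IsNondegenerateTwoForm.exists_apply_eq_one (hΩ : IsNondegenerateTwoForm Ω) {X : V}
    (hX : X ≠ 0) : ∃ Y, Ω ![X, Y] = 1 := by
  obtain ⟨Y, hY⟩ := hΩ X hX
  refine ⟨(Ω ![X, Y])⁻¹ • Y, ?_⟩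
  rw [← twoFormContract_apply, map_smul, twoFormContract_apply, smul_eq_mul, inv_mul_cancel₀ hY]

variable {Ω} in
lemma IsNondegenerateTwoForm.compLinearMap_pairOrthogonal
    (hΩ : IsNondegenerateTwoForm Ω) {X Y : V} (hXY : Ω ![X, Y] = 1) :
    IsNondegenerateTwoForm (Ω.compLinearMap (pairOrthogonal Ω X Y).subtype) := by
  rintro ⟨Z, hZmem⟩ hZ0
  have hZ := (mem_pairOrthogonal Ω).mp hZmem
  obtain ⟨v, hv⟩ := hΩ Z (by simpa using hZ0)
  -- `T` is the component of `v` in `pairOrthogonal Ω X Y` along `span {X, Y}`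
  set T := v - Ω ![X, v] • Y + Ω ![Y, v] • X
  have hT : ∀ U, Ω ![U, T] = Ω ![U, v] - Ω ![X, v] * Ω ![U, Y] + Ω ![Y, v] * Ω ![U, X] :=
    fun U => by simp [← twoFormContract_apply, T]
  have hTmem : T ∈ pairOrthogonal Ω X Y := by
    rw [mem_pairOrthogonal, hT, hT, hXY, twoForm_apply_swap Ω X Y, hXY, twoForm_apply_self,
      twoForm_apply_self]
    constructor <;> ring
  refine ⟨⟨T, hTmem⟩, ?_⟩
  rw [twoForm_compLinearMap_apply]
  change Ω ![Z, T] ≠ 0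
  rwa [hT, twoForm_apply_swap Ω Y Z, twoForm_apply_swap Ω X Z, hZ.1, hZ.2, neg_zero, mul_zero,
    mul_zero, sub_zero, add_zero]

end Nondegenerate

theorem IsNondegenerateTwoForm.wpow_ne_zero {V : Type*} [AddCommGroup V] [Module ℝ V]
    [FiniteDimensional ℝ V] {Ω : V [⋀^Fin 2]→ₗ[ℝ] ℝ} (hΩ : IsNondegenerateTwoForm Ω) {n : ℕ}
    (hn : 2 * n ≤ Module.finrank ℝ V) : wpow Ω n ≠ 0 := by
  induction n generalizing V with
  | zero =>
    intro h
    have h0 := DFunLike.congr_fun h 0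
    rw [wpow_zero_apply] at h0
    exact one_ne_zero h0
  | succ n ih =>
    have : Nontrivial V := Module.nontrivial_of_finrank_pos (R := ℝ) (by omega)
    obtain ⟨X, hX⟩ := exists_ne (0 : V)
    obtain ⟨Y, hXY⟩ := hΩ.exists_apply_eq_one hX
    have hW : 2 * n ≤ Module.finrank ℝ (pairOrthogonal Ω X Y) := by
      have := finrank_le_finrank_pairOrthogonal_add_two Ω X Y
      omega
    obtain ⟨w, hw⟩ := DFunLike.ne_iff.mp (ih (hΩ.compLinearMap_pairOrthogonal hXY) hW)
    rw [wpow_compLinearMap, AlternatingMap.compLinearMap_apply] at hw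
    have hcons := wpow_succ_cons_cons Ω (w := fun k => (w k : V))
      (fun k => ((mem_pairOrthogonal Ω).mp (w k).2).1)
      (fun k => ((mem_pairOrthogonal Ω).mp (w k).2).2)
    intro h
    rw [h, AlternatingMap.zero_apply, hXY, one_mul] at hcons
    exact hw (by simpa [Nat.cast_add_one_ne_zero] using hcons.symm)

/-- If `V` has dimension `2n`, `n ≥ 1`, and `Ω` is a nondegenerate
alternating 2-form on `V`, then the top-degree form `Ω^n` is nonzero. -/
theorem wpow_ne_zero {V : Type*} [AddCommGroup V] [Module ℝ V]
    [FiniteDimensional ℝ V] (n : ℕ)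
    (hdim : Module.finrank ℝ V = 2 * n)
    (Ω : V [⋀^Fin 2]→ₗ[ℝ] ℝ)
    (hΩ : ∀ X : V, X ≠ 0 → ∃ Y : V, Ω ![X, Y] ≠ 0) :
    wpow Ω n ≠ 0 :=
  IsNondegenerateTwoForm.wpow_ne_zero hΩ hdim.ge
end

section
/- Let V be a real vector space of dimension 2n with n ≥ 2, and let Ω be a nondegenerate alternating 2-form on V. If α ∈ V* satisfies α ∧ Ω = 0 (as an alternating 3-form on V), then α = 0. -/
open scoped TensorProduct

open Equiv
set_option synthInstance.maxHeartbeats 1000000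
set_option maxHeartbeats 1000000

lemma key {V : Type*} [AddCommGroup V] [Module ℝ V]
    (α : V →ₗ[ℝ] ℝ) (Ω : V [⋀^Fin 2]→ₗ[ℝ] ℝ) (X Y Z : V) :
    (2:ℝ) * wedge (oneForm α) Ω ![X, Y, Z]
      = 2 * (α X * Ω ![Y, Z] - α Y * Ω ![X, Z] + α Z * Ω ![X, Y]) := by
  set a := oneForm α with ha
  set v : Fin 3 → V := ![X, Y, Z] with hv
  set w : Fin 1 ⊕ Fin 2 → V := v ∘ finSumFinEquiv with hw
  have hA : wedge a Ω ![X, Y, Z] = TensorProduct.lid ℝ ℝ ((a.domCoprod Ω) w) := rfl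
  have hBw : ∑ σ : Perm (Fin 1 ⊕ Fin 2),
        Perm.sign σ • (MultilinearMap.domCoprod (a : MultilinearMap ℝ (fun _ : Fin 1 => V) ℝ)
          (Ω : MultilinearMap ℝ (fun _ : Fin 2 => V) ℝ)) (w ∘ σ)
      = (2:ℕ) • (a.domCoprod Ω) w := by
    have := congrArg (fun f => f w) (MultilinearMap.domCoprod_alternization_eq a Ω)
    simpa [MultilinearMap.alternatization_apply] using this
  have hC : ∑ σ : Perm (Fin 1 ⊕ Fin 2),
        Perm.sign σ • (MultilinearMap.domCoprod (a : MultilinearMap ℝ (fun _ : Fin 1 => V) ℝ)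
          (Ω : MultilinearMap ℝ (fun _ : Fin 2 => V) ℝ)) (w ∘ σ)
      = ∑ τ : Perm (Fin 3), Perm.sign τ • (α (v (τ 0)) ⊗ₜ[ℝ] Ω ![v (τ 1), v (τ 2)]) := by
    refine Fintype.sum_equiv finSumFinEquiv.permCongr _ _ fun σ => ?_
    rw [Perm.sign_permCongr]
    congr 1
    rw [MultilinearMap.domCoprod_apply]
    congr 1
    show Ω (fun i => (w ∘ ⇑σ) (Sum.inr i))
      = Ω ![v ((finSumFinEquiv.permCongr σ) 1), v ((finSumFinEquiv.permCongr σ) 2)]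
    congr 1
    funext i
    fin_cases i <;>
      simp only [hw, permCongr_apply, Function.comp, Matrix.cons_val_zero, Matrix.cons_val_one,
        Matrix.head_cons] <;> congr 2
  have hsw : ∀ P Q : V, Ω ![Q, P] = - Ω ![P, Q] := by
    intro P Q
    have h := Ω.map_swap ![Q, P] (show (0 : Fin 2) ≠ 1 by decide)
    have h2 : (![Q, P] ∘ Equiv.swap (0:Fin 2) 1) = ![P, Q] := by
      funext i; fin_cases i <;> simp [Equiv.swap_apply_def]
    rw [h2] at h
    linarith [h]
  have huniv : (Finset.univ : Finset (Perm (Fin 3)))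
      = {1, swap 0 1, swap 0 2, swap 1 2, swap 0 1 * swap 1 2, swap 1 2 * swap 0 1} := by
    decide
  have hmain : (2:ℝ) * wedge a Ω ![X, Y, Z]
      = ∑ τ : Perm (Fin 3), ((Perm.sign τ : ℤ) : ℝ) * (α (v (τ 0)) * Ω ![v (τ 1), v (τ 2)]) := by
    calc (2:ℝ) * wedge a Ω ![X, Y, Z]
        = TensorProduct.lid ℝ ℝ ((2:ℕ) • (a.domCoprod Ω) w) := by
          rw [hA, two_smul, map_add, two_mul]
      _ = TensorProduct.lid ℝ ℝ (∑ τ : Perm (Fin 3),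
            Perm.sign τ • α (v (τ 0)) ⊗ₜ[ℝ] Ω ![v (τ 1), v (τ 2)]) := by rw [← hBw, hC]
      _ = ∑ τ : Perm (Fin 3), ((Perm.sign τ : ℤ) : ℝ) * (α (v (τ 0)) * Ω ![v (τ 1), v (τ 2)]) := by
          rw [map_sum]
          refine Finset.sum_congr rfl fun τ _ => ?_
          rw [Units.smul_def, ← Int.cast_smul_eq_zsmul ℝ, map_smul, TensorProduct.lid_tmul,
            smul_eq_mul, smul_eq_mul]
  rw [hmain, huniv]
  rw [Finset.sum_insert (by decide), Finset.sum_insert (by decide),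
    Finset.sum_insert (by decide), Finset.sum_insert (by decide),
    Finset.sum_insert (by decide), Finset.sum_singleton]
  have e1 : ∀ i j : Fin 3, i ≠ j → ((Perm.sign (swap i j) : ℤ) : ℝ) = -1 := by
    intro i j h; rw [Perm.sign_swap h]; norm_num
  simp only [Perm.mul_apply, Perm.sign_mul, Perm.one_apply, Perm.sign_one,
    Equiv.swap_apply_def]
  norm_num [hv]
  simp (config := { decide := true })
  rw [hsw X Y, hsw Y Z, hsw X Z]
  ring

/-- If `V` has dimension `2n`, `n ≥ 2`, `Ω` is a nondegenerate alternating
2-form on `V` and `α ∈ V*` satisfies `α ∧ Ω = 0`, then `α = 0`. -/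
theorem wedge_two_form_injective {V : Type*} [AddCommGroup V] [Module ℝ V]
    [FiniteDimensional ℝ V] (n : ℕ) (hn : 2 ≤ n)
    (hdim : Module.finrank ℝ V = 2 * n)
    (Ω : V [⋀^Fin 2]→ₗ[ℝ] ℝ)
    (hΩ : ∀ X : V, X ≠ 0 → ∃ Y : V, Ω ![X, Y] ≠ 0)
    (α : V →ₗ[ℝ] ℝ) (hα : wedge (oneForm α) Ω = 0) :
    α = 0 := by
  have hid : ∀ X Y Z : V, α X * Ω ![Y, Z] - α Y * Ω ![X, Z] + α Z * Ω ![X, Y] = 0 := by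
    intro X Y Z
    have h := key α Ω X Y Z
    rw [hα] at h
    simp at h
    linarith
  by_contra hne
  obtain ⟨X, hX⟩ : ∃ X : V, α X ≠ 0 := by
    by_contra h
    push_neg at h
    exact hne (LinearMap.ext fun x => h x)
  have hcons : ∀ P Q : V, Function.update ![X, Q] 1 P = ![X, P] := by
    intro P Q
    funext i
    fin_cases i <;> simp [Function.update]
  have hβ : ∃ β : V →ₗ[ℝ] ℝ, ∀ Y, β Y = Ω ![X, Y] := by
    refine ⟨⟨⟨fun Y => Ω ![X, Y], ?_⟩, ?_⟩, fun _ => rfl⟩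
    · intro Y₁ Y₂
      have := Ω.map_update_add ![X, (0:V)] 1 Y₁ Y₂
      simpa [hcons] using this
    · intro c Y
      have := Ω.map_update_smul ![X, (0:V)] 1 c Y
      simpa [hcons] using this
  obtain ⟨β, hβ⟩ := hβ
  set γ : V →ₗ[ℝ] ℝ × ℝ := α.prod β with hγ
  have hker : LinearMap.ker γ ≠ ⊥ := by
    intro hbot
    have h1 := LinearMap.finrank_range_add_finrank_ker γ
    have h2 : Module.finrank ℝ (LinearMap.range γ) ≤ 2 := by
      have := Submodule.finrank_le (LinearMap.range γ)
      simpa [Module.finrank_prod] using this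
    rw [hbot, finrank_bot, hdim] at h1
    omega
  obtain ⟨Z, hZmem, hZ⟩ := Submodule.exists_mem_ne_zero_of_ne_bot hker
  have hαZ : α Z = 0 ∧ β Z = 0 := by
    have : γ Z = 0 := hZmem
    exact ⟨congrArg Prod.fst this, congrArg Prod.snd this⟩
  obtain ⟨W, hW⟩ := hΩ Z hZ
  have h := hid X Z W
  have hXZ : Ω ![X, Z] = 0 := by rw [← hβ]; exact hαZ.2
  rw [hαZ.1, hXZ] at h
  simp at h
  rcases h with h | h
  · exact hX h
  · exact hW h
end

section
/- Let n ≥ 2 and let W be a real vector space of dimension 2n+1. Let η ∈ W* and ξ ∈ W with η(ξ) = 1, and let Φ be an alternating 2-form on W with Φ(ξ, ·) = 0 whose restriction to the hyperplane ker η is nondegenerate. If β ∈ W* satisfies β(ξ) = 0 and β ∧ η ∧ Φ = 0 (as an alternating 4-form on W), then β = 0. -/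
open scoped TensorProduct

/-!
Evaluating `β ∧ η ∧ Φ` on `(ξ, X, Y, Z)` with `X, Y, Z ∈ ker η` gives
`β X · Φ(Y, Z) - β Y · Φ(X, Z) + β Z · Φ(X, Y) = 0`. If `β X ≠ 0`, pick `Y ≠ 0` in
`ker η ∩ ker β ∩ ker Φ(X, ·)`, which exists because `dim W = 2n + 1 > 3`; nondegeneracy gives
`Z ∈ ker η` with `Φ(Y, Z) ≠ 0`, and the identity collapses to `β X · Φ(Y, Z) = 0`.
So `β` vanishes on `ker η` and at `ξ`, hence everywhere.
-/

open Equiv Fin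

section WedgeOneForm

variable {V : Type*} [AddCommGroup V] [Module ℝ V] {m : ℕ}

lemma sum_sign_smul_map_perm (θ : V [⋀^Fin m]→ₗ[ℝ] ℝ) (w : Fin m → V) :
    ∑ e : Perm (Fin m), Perm.sign e • θ (w ∘ e) = m.factorial * θ w := by
  simp only [θ.map_perm, smul_smul, Int.units_mul_self, one_smul, Finset.sum_const,
    Finset.card_univ, Fintype.card_perm, Fintype.card_fin, nsmul_eq_mul]

lemma factorial_mul_castForm_wedge_oneForm_apply (a : V →ₗ[ℝ] ℝ) (θ : V [⋀^Fin m]→ₗ[ℝ] ℝ)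
    (v : Fin (m + 1) → V) :
    (m.factorial : ℝ) * castForm (add_comm 1 m) (wedge (oneForm a) θ) v =
      ∑ τ : Perm (Fin (m + 1)), Perm.sign τ • (a (v (τ 0)) * θ (v ∘ τ ∘ succ)) := by
  set E : Fin 1 ⊕ Fin m ≃ Fin (m + 1) := finSumFinEquiv.trans (finCongr (add_comm 1 m))
  have hE0 : E.symm 0 = Sum.inl 0 := E.symm_apply_eq.2 (by ext; simp [E])
  have hEsucc (j : Fin m) : E.symm j.succ = Sum.inr j := E.symm_apply_eq.2 (by ext; simp [E])
  have halt := congrArg (fun f => TensorProduct.lid ℝ ℝ (f (v ∘ E)))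
    (MultilinearMap.domCoprod_alternization_eq (oneForm a) θ)
  simp only [Fintype.card_unique, Nat.factorial_one, one_mul, Fintype.card_fin,
    AlternatingMap.smul_apply, map_nsmul, MultilinearMap.alternatization_apply, map_sum] at halt
  rw [nsmul_eq_mul] at halt
  rw [show castForm (add_comm 1 m) (wedge (oneForm a) θ) v
      = TensorProduct.lid ℝ ℝ ((oneForm a).domCoprod θ (v ∘ E)) from rfl, ← halt]
  refine Fintype.sum_equiv (permCongr E) _ _ fun σ => ?_
  simp only [Perm.sign_permCongr, Function.comp_def, MultilinearMap.domDomCongr_apply,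
    MultilinearMap.domCoprod_apply, map_zsmul_unit, TensorProduct.lid_tmul, smul_eq_mul,
    permCongr_apply, hE0, hEsucc]
  rfl

/-- `v ∘ swap 0 p ∘ succ` is `v` with `v 0` moved into slot `p` and slot `0` removed; moving
`v 0` back costs the sign `(-1) ^ p`. -/
lemma ite_mul_map_swap_comp_succ (θ : V [⋀^Fin m]→ₗ[ℝ] ℝ) (v : Fin (m + 1) → V)
    (p : Fin (m + 1)) :
    (if p = 0 then (1 : ℝ) else -1) * θ (v ∘ swap 0 p ∘ succ) =
      (-1) ^ (p : ℕ) * θ (p.removeNth v) := by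
  split_ifs with hp
  · subst hp
    simp only [swap_self, coe_refl, Function.id_comp, one_mul, val_zero, pow_zero, removeNth_zero]
    rfl
  · have hsum := θ.neg_one_pow_smul_map_removeNth_add_eq_zero_of_eq
      (v := Function.update v p (v 0)) (i := 0) (j := p) (by simp [Ne.symm hp]) (Ne.symm hp)
    have hmoved : (0 : Fin (m + 1)).removeNth (Function.update v p (v 0)) =
        v ∘ swap 0 p ∘ succ := by
      ext j
      simp only [removeNth_zero, tail, Function.update_apply, Function.comp_apply, swap_apply_def]
      split_ifs <;> simp_all
    rw [hmoved, removeNth_update] at hsum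
    simp only [val_zero, pow_zero, one_smul, zsmul_eq_mul, Int.cast_pow, Int.cast_neg,
      Int.cast_one] at hsum
    linarith

/-- Laplace expansion of `a ∧ θ` along the first slot. -/
theorem castForm_wedge_oneForm (a : V →ₗ[ℝ] ℝ) (θ : V [⋀^Fin m]→ₗ[ℝ] ℝ) :
    castForm (add_comm 1 m) (wedge (oneForm a) θ) =
      AlternatingMap.alternatizeUncurryFin (a.smulRight θ) := by
  ext v
  apply mul_left_cancel₀ (show (m.factorial : ℝ) ≠ 0 by positivity)
  rw [factorial_mul_castForm_wedge_oneForm_apply, AlternatingMap.alternatizeUncurryFin_apply,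
    Finset.mul_sum, ← Perm.decomposeFin.symm.sum_comp, Fintype.sum_prod_type]
  refine Finset.sum_congr rfl fun p _ => ?_
  calc ∑ e : Perm (Fin m), Perm.sign (Perm.decomposeFin.symm (p, e)) •
        (a (v (Perm.decomposeFin.symm (p, e) 0)) * θ (v ∘ Perm.decomposeFin.symm (p, e) ∘ succ))
      = (if p = 0 then (1 : ℝ) else -1) * a (v p) *
          ∑ e : Perm (Fin m), Perm.sign e • θ ((v ∘ swap 0 p ∘ succ) ∘ e) := by
        rw [Finset.mul_sum]
        refine Finset.sum_congr rfl fun e _ => ?_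
        simp only [Perm.decomposeFin.symm_sign, Perm.decomposeFin_symm_apply_zero,
          Function.comp_def, Perm.decomposeFin_symm_apply_succ]
        rw [mul_smul, mul_smul_comm, mul_assoc]
        split_ifs <;> simp
    _ = m.factorial * ((-1) ^ (p : ℕ) • (a.smulRight θ) (v p) (p.removeNth v)) := by
        rw [sum_sign_smul_map_perm]
        simp only [LinearMap.smulRight_apply, AlternatingMap.smul_apply, smul_eq_mul]
        linear_combination (m.factorial * a (v p)) * ite_mul_map_swap_comp_succ θ v p

lemma wedge_oneForm_apply_three (a : V →ₗ[ℝ] ℝ) (θ : V [⋀^Fin 2]→ₗ[ℝ] ℝ) (x y z : V) :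
    wedge (oneForm a) θ ![x, y, z] = a x * θ ![y, z] - a y * θ ![x, z] + a z * θ ![x, y] := by
  change castForm (add_comm 1 2) (wedge (oneForm a) θ) ![x, y, z] = _
  have h1 : removeNth 1 ![x, y, z] = ![x, z] := by ext i; fin_cases i <;> rfl
  have h2 : removeNth 2 ![x, y, z] = ![x, y] := by ext i; fin_cases i <;> rfl
  simp [castForm_wedge_oneForm, AlternatingMap.alternatizeUncurryFin_apply, sum_univ_succ, h1, h2,
    sub_eq_add_neg, add_assoc]

lemma wedge_oneForm_apply_four (a : V →ₗ[ℝ] ℝ) (θ : V [⋀^Fin 3]→ₗ[ℝ] ℝ) (x y z w : V) :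
    wedge (oneForm a) θ ![x, y, z, w] =
      a x * θ ![y, z, w] - a y * θ ![x, z, w] + a z * θ ![x, y, w] - a w * θ ![x, y, z] := by
  change castForm (add_comm 1 3) (wedge (oneForm a) θ) ![x, y, z, w] = _
  have h1 : removeNth 1 ![x, y, z, w] = ![x, z, w] := by ext i; fin_cases i <;> rfl
  have h2 : removeNth 2 ![x, y, z, w] = ![x, y, w] := by ext i; fin_cases i <;> rfl
  have h3 : removeNth 3 ![x, y, z, w] = ![x, y, z] := by ext i; fin_cases i <;> rfl
  simp [castForm_wedge_oneForm, AlternatingMap.alternatizeUncurryFin_apply, sum_univ_succ,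
    h1, h2, h3, sub_eq_add_neg, pow_succ, add_assoc, add_comm, add_left_comm]

end WedgeOneForm

lemma exists_ne_zero_apply_eq_zero_of_three_lt_finrank {K V : Type*} [Field K] [AddCommGroup V]
    [Module K V] [FiniteDimensional K V] (hV : 3 < Module.finrank K V) (f g h : V →ₗ[K] K) :
    ∃ Y ≠ 0, f Y = 0 ∧ g Y = 0 ∧ h Y = 0 := by
  obtain ⟨Y, hY, hY0⟩ := Submodule.exists_mem_ne_zero_of_ne_bot
    (LinearMap.ker_ne_bot_of_finrank_lt (f := f.prod (g.prod h)) (by simpa using hV))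
  simp only [LinearMap.mem_ker, LinearMap.prod_apply, Function.prod, Prod.mk_eq_zero] at hY
  exact ⟨Y, hY0, hY⟩

section TwoForms

variable {W : Type*} [AddCommGroup W] [Module ℝ W]

lemma wedge_oneForm_apply_vecCons_of_mem_ker {η : W →ₗ[ℝ] ℝ} {ξ : W} (hηξ : η ξ = 1)
    {Φ : W [⋀^Fin 2]→ₗ[ℝ] ℝ} (hΦξ : ∀ X : W, Φ ![ξ, X] = 0) {A B : W} (hA : η A = 0)
    (hB : η B = 0) :
    wedge (oneForm η) Φ ![ξ, A, B] = Φ ![A, B] := by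
  rw [wedge_oneForm_apply_three, hηξ, hA, hB, hΦξ, hΦξ]
  ring

lemma alternating_sum_eq_zero_of_wedge_eq_zero {η β : W →ₗ[ℝ] ℝ} {ξ : W} (hηξ : η ξ = 1)
    (hβξ : β ξ = 0) {Φ : W [⋀^Fin 2]→ₗ[ℝ] ℝ} (hΦξ : ∀ X : W, Φ ![ξ, X] = 0)
    (hβ : wedge (oneForm β) (wedge (oneForm η) Φ) = 0) {X Y Z : W} (hX : η X = 0)
    (hY : η Y = 0) (hZ : η Z = 0) :
    β X * Φ ![Y, Z] - β Y * Φ ![X, Z] + β Z * Φ ![X, Y] = 0 := by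
  have h := congrArg (· ![ξ, X, Y, Z]) hβ
  simp only [AlternatingMap.zero_apply, wedge_oneForm_apply_four, hβξ,
    wedge_oneForm_apply_vecCons_of_mem_ker hηξ hΦξ, hX, hY, hZ] at h
  linarith

lemma apply_eq_zero_of_alternating_sum_eq_zero [FiniteDimensional ℝ W]
    (hW : 3 < Module.finrank ℝ W) {η β : W →ₗ[ℝ] ℝ} {Φ : W [⋀^Fin 2]→ₗ[ℝ] ℝ}
    (hnd : ∀ X : W, η X = 0 → X ≠ 0 → ∃ Y : W, η Y = 0 ∧ Φ ![X, Y] ≠ 0)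
    (hsum : ∀ X Y Z : W, η X = 0 → η Y = 0 → η Z = 0 →
      β X * Φ ![Y, Z] - β Y * Φ ![X, Z] + β Z * Φ ![X, Y] = 0)
    {X : W} (hX : η X = 0) :
    β X = 0 := by
  obtain ⟨Y, hY0, hηY, hβY, hΦXY⟩ := exists_ne_zero_apply_eq_zero_of_three_lt_finrank hW η β
    ((AlternatingMap.ofSubsingleton ℝ W ℝ 0).symm (Φ.curryLeft X))
  have hΦXY : Φ ![X, Y] = 0 := by simpa [Matrix.cons_fin_one] using hΦXY
  obtain ⟨Z, hηZ, hΦYZ⟩ := hnd Y hηY hY0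
  have h := hsum X Y Z hX hηY hηZ
  rw [hβY, hΦXY] at h
  exact (mul_eq_zero.mp (by linarith : β X * Φ ![Y, Z] = 0)).resolve_right hΦYZ

end TwoForms

/-- Let `W` have dimension `2n+1`, `n ≥ 2`, `η ∈ W*`, `ξ ∈ W` with
`η ξ = 1`, and let `Φ` be an alternating 2-form with `Φ(ξ,·) = 0` whose restriction to
`ker η` is nondegenerate.  If `β ∈ W*` satisfies `β ξ = 0` and `β ∧ η ∧ Φ = 0`,
then `β = 0`. -/
theorem transverse_form_vanishes {W : Type*} [AddCommGroup W] [Module ℝ W]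
    [FiniteDimensional ℝ W] (n : ℕ) (hn : 2 ≤ n)
    (hdim : Module.finrank ℝ W = 2 * n + 1)
    (η : W →ₗ[ℝ] ℝ) (ξ : W) (hηξ : η ξ = 1)
    (Φ : W [⋀^Fin 2]→ₗ[ℝ] ℝ)
    (hΦξ : ∀ X : W, Φ ![ξ, X] = 0)
    (hnd : ∀ X : W, η X = 0 → X ≠ 0 → ∃ Y : W, η Y = 0 ∧ Φ ![X, Y] ≠ 0)
    (β : W →ₗ[ℝ] ℝ) (hβξ : β ξ = 0)
    (hβ : wedge (oneForm β) (wedge (oneForm η) Φ) = 0) :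
    β = 0 := by
  have hker : ∀ X : W, η X = 0 → β X = 0 := fun X hX =>
    apply_eq_zero_of_alternating_sum_eq_zero (by omega) hnd
      (fun _ _ _ => alternating_sum_eq_zero_of_wedge_eq_zero hηξ hβξ hΦξ hβ) hX
  ext w
  simpa [hβξ] using hker (w - η w • ξ) (by simp [hηξ])
end
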